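/- There are no Gaussian integers n, m, n', m' with n·m ≠ 0, gcd(n, m) a unit, gcd(n', m') a unit, m and m' both divisible by 1+i, such that n^2 + m^2 = n'^2 - m'^2 and n·m = n'·m'. -/

import Mathlib

/-!
Writing `n = ab`, `m = cd`, `n' = ac`, `m' = bd` (up to a unit), the system turns into
`e² = a⁴ - d⁴` with `a` odd and `d = πʲ t` even, that is `r z² = x⁴ + s·4ʲ·y⁴` with `x, y` odd
and coprime and `r, s = ±1`. The factorisation `r (z + ιC)(z - ιC) = x⁴` with `ι² = rs`,
`C = 2ʲy²` into coprime factors gives `δ₁G⁴ - δ₂H⁴ = 2ʲ⁺¹ι y²` with units `δ₁, δ₂`. Odd fourth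
powers are `1` mod 8, so for `j = 1` the units cannot match mod 8, and for `j ≥ 2` they must be
equal; factoring `G⁴ - H⁴ = (G² + σH²)(G² - σH²)` for the sign `σ` making `(G² + σH²)/2` odd then
yields a solution of the same shape with `j - 1`.
-/

open Zsqrtd
local notation "ℤ[i]" => GaussianInt
local notation "π" => (1 + sqrtd : ℤ[i])

theorem IsCoprime.of_add_of_sub {R : Type*} [CommRing R] {c p q x y : R} (hc : IsCoprime c p)
    (hxy : IsCoprime x y) (hadd : p + q = c * x) (hsub : p - q = c * y) : IsCoprime p q := by
  obtain ⟨a, b, hab⟩ := hxy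
  obtain ⟨r, t, hrt⟩ := hc
  exact ⟨r * (a + b) + t, r * (a - b), by
    linear_combination r * a * hadd + r * b * hsub + r * c * hab + hrt⟩

theorem exists_eq_mul_of_mul_eq_mul {R : Type*} [CommRing R] [IsDomain R] [DecompositionMonoid R]
    {n m n' m' : R} (hn' : n' ≠ 0) (hnm : IsCoprime n m) (hnm' : IsCoprime n' m')
    (h : n * m = n' * m') :
    ∃ (a b c d : R) (u : Rˣ), n = a * b ∧ m = c * d ∧ n' * u = a * c ∧ m' = u * (b * d) := by
  obtain ⟨a, b, ha, hb, rfl⟩ := exists_dvd_and_dvd_of_dvd_mul (h ▸ dvd_mul_right n m)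
  obtain ⟨c, d, hc, hd, rfl⟩ := exists_dvd_and_dvd_of_dvd_mul (h ▸ dvd_mul_left m (a * b))
  have hac : IsCoprime a c := hnm.of_mul_left_left.of_mul_right_left
  have hbd : IsCoprime n' (b * d) :=
    (hnm'.of_isCoprime_of_dvd_right hb).mul_right (hnm'.of_isCoprime_of_dvd_right hd)
  obtain ⟨u, hu⟩ : Associated n' (a * c) :=
    associated_of_dvd_dvd (hbd.dvd_of_dvd_mul_right ⟨m', by rw [← h]; ring⟩) (hac.mul_dvd ha hc)
  exact ⟨a, b, c, d, u, rfl, rfl, hu, mul_left_cancel₀ hn' (by linear_combination -h - b * d * hu)⟩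

namespace GaussianInt

theorem two_eq_neg_sqrtd_mul_sq : (2 : ℤ[i]) = -sqrtd * π ^ 2 := by decide

theorem prime_one_add_sqrtd : Prime π := by
  have : IsLocalHom (normMonoidHom (d := -1)) := ⟨fun a ha => (isUnit_iff_norm_isUnit a).2 ha⟩
  refine (Irreducible.of_map (f := normMonoidHom (d := -1)) ?_).prime
  exact (show normMonoidHom π = 2 by decide) ▸ Int.prime_two.irreducible

theorem isUnit_sqrtd : IsUnit (sqrtd : ℤ[i]) := isUnit_iff_exists_inv.2 ⟨-sqrtd, by decide⟩

theorem isCoprime_two_iff_not_dvd {x : ℤ[i]} : IsCoprime 2 x ↔ ¬ π ∣ x := by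
  rw [← prime_one_add_sqrtd.coprime_iff_not_dvd, two_eq_neg_sqrtd_mul_sq,
    isCoprime_mul_unit_left_left isUnit_sqrtd.neg, IsCoprime.pow_left_iff two_pos]

theorem isUnit_iff {u : ℤ[i]} : IsUnit u ↔ u = 1 ∨ u = -1 ∨ u = sqrtd ∨ u = -sqrtd := by
  refine ⟨fun h => ?_, ?_⟩
  · rw [← norm_eq_one_iff' (by norm_num)] at h
    obtain ⟨a, b⟩ := u
    have hab : a * a + b * b = 1 := by simpa [Zsqrtd.norm] using h
    obtain ⟨ha₁, ha₂⟩ : -1 ≤ a ∧ a ≤ 1 := by constructor <;> nlinarith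
    obtain ⟨hb₁, hb₂⟩ : -1 ≤ b ∧ b ≤ 1 := by constructor <;> nlinarith
    interval_cases a <;> interval_cases b <;> simp_all <;> decide
  · rintro (rfl | rfl | rfl | rfl)
    exacts [isUnit_one, isUnit_one.neg, isUnit_sqrtd, isUnit_sqrtd.neg]

theorem pow_four_eq_one_of_isUnit {u : ℤ[i]} (hu : IsUnit u) : u ^ 4 = 1 := by
  rcases isUnit_iff.1 hu with rfl | rfl | rfl | rfl <;> decide

theorem exists_isUnit_sq_eq {s : ℤ[i]} (hs : s ^ 2 = 1) : ∃ ι : ℤ[i], IsUnit ι ∧ ι ^ 2 = s := by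
  rcases sq_eq_one_iff.1 hs with rfl | rfl
  exacts [⟨1, isUnit_one, one_pow 2⟩, ⟨sqrtd, isUnit_sqrtd, by decide⟩]

theorem exists_eq_add_two_mul {x : ℤ[i]} (hx : IsCoprime 2 x) :
    ∃ ε t : ℤ[i], (ε = 1 ∨ ε = sqrtd) ∧ x = ε + 2 * t := by
  rw [isCoprime_two_iff_not_dvd] at hx
  obtain ⟨a, b⟩ := x
  rcases Int.emod_two_eq_zero_or_one a with ha | ha <;>
    rcases Int.emod_two_eq_zero_or_one b with hb | hb
  · exact absurd ⟨⟨(a + b) / 2, (b - a) / 2⟩, by ext <;> simp <;> omega⟩ hx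
  · exact ⟨sqrtd, ⟨a / 2, b / 2⟩, Or.inr rfl, by ext <;> simp <;> omega⟩
  · exact ⟨1, ⟨a / 2, b / 2⟩, Or.inl rfl, by ext <;> simp <;> omega⟩
  · exact absurd ⟨⟨(a + b) / 2, (b - a) / 2⟩, by ext <;> simp <;> omega⟩ hx

theorem exists_sq_eq_add_four_mul {x : ℤ[i]} (hx : IsCoprime 2 x) :
    ∃ σ t : ℤ[i], σ ^ 2 = 1 ∧ x ^ 2 = σ + 4 * t := by
  obtain ⟨ε, t, hε, rfl⟩ := exists_eq_add_two_mul hx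
  refine ⟨ε ^ 2, ε * t + t ^ 2, ?_, by ring⟩
  rcases hε with rfl | rfl <;> decide

theorem eight_dvd_pow_four_sub_one {x : ℤ[i]} (hx : IsCoprime 2 x) : 8 ∣ x ^ 4 - 1 := by
  obtain ⟨σ, t, hσ, hx⟩ := exists_sq_eq_add_four_mul hx
  exact ⟨σ * t + 2 * t ^ 2, by linear_combination (x ^ 2 + σ + 4 * t) * hx + hσ⟩

theorem eight_dvd_mul_pow_four_sub_mul_pow_four_sub {δ₁ δ₂ G H : ℤ[i]} (hG : IsCoprime 2 G)
    (hH : IsCoprime 2 H) : 8 ∣ δ₁ * G ^ 4 - δ₂ * H ^ 4 - (δ₁ - δ₂) := by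
  obtain ⟨g, hg⟩ := eight_dvd_pow_four_sub_one hG
  obtain ⟨h, hh⟩ := eight_dvd_pow_four_sub_one hH
  exact ⟨δ₁ * g - δ₂ * h, by linear_combination δ₁ * hg - δ₂ * hh⟩

theorem eight_dvd_iff {x : ℤ[i]} : 8 ∣ x ↔ 8 ∣ x.re ∧ 8 ∣ x.im := by
  rw [← intCast_dvd]; norm_cast

theorem eq_of_eight_dvd_sub {δ₁ δ₂ : ℤ[i]} (h₁ : IsUnit δ₁) (h₂ : IsUnit δ₂) (h : 8 ∣ δ₁ - δ₂) :
    δ₁ = δ₂ := by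
  rw [eight_dvd_iff] at h
  rcases isUnit_iff.1 h₁ with rfl | rfl | rfl | rfl <;>
    rcases isUnit_iff.1 h₂ with rfl | rfl | rfl | rfl <;> first | rfl | (revert h; decide)

theorem not_eight_dvd_four_mul_sub_add {u δ₁ δ₂ : ℤ[i]} (hu : IsUnit u) (h₁ : IsUnit δ₁)
    (h₂ : IsUnit δ₂) : ¬ 8 ∣ 4 * u - δ₁ + δ₂ := by
  rw [eight_dvd_iff]
  rcases isUnit_iff.1 hu with rfl | rfl | rfl | rfl <;>
    rcases isUnit_iff.1 h₁ with rfl | rfl | rfl | rfl <;>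
    rcases isUnit_iff.1 h₂ with rfl | rfl | rfl | rfl <;> decide

def HasOddSolution (j : ℕ) : Prop :=
  ∃ r s x y z : ℤ[i], r ^ 2 = 1 ∧ s ^ 2 = 1 ∧ IsCoprime 2 x ∧ IsCoprime 2 y ∧ IsCoprime x y ∧
    r * z ^ 2 = x ^ 4 + s * 4 ^ j * y ^ 4

theorem exists_mul_pow_four_sub_mul_pow_four {j : ℕ} {r s x y z : ℤ[i]} (hr : r ^ 2 = 1)
    (hs : s ^ 2 = 1) (hx : IsCoprime 2 x) (hxy : IsCoprime x y)
    (h : r * z ^ 2 = x ^ 4 + s * 4 ^ (j + 1) * y ^ 4) :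
    ∃ δ₁ δ₂ ι G H : ℤ[i], IsUnit δ₁ ∧ IsUnit δ₂ ∧ IsUnit ι ∧ IsCoprime 2 G ∧ IsCoprime 2 H ∧
      IsCoprime G H ∧ δ₁ * G ^ 4 - δ₂ * H ^ 4 = 2 ^ (j + 2) * ι * y ^ 2 := by
  obtain ⟨ι, hι, hι2⟩ := exists_isUnit_sq_eq (s := r * s) (by linear_combination s ^ 2 * hr + hs)
  obtain ⟨C, hC⟩ : ∃ C : ℤ[i], 2 ^ (j + 1) * y ^ 2 = C := ⟨_, rfl⟩
  have hzC : r * z ^ 2 = x ^ 4 + s * C * C := by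
    rw [h, ← hC, show (4 : ℤ[i]) ^ (j + 1) = (2 ^ (j + 1)) ^ 2 by rw [sq, ← mul_pow]; norm_num]
    ring
  have hfac : r * ((z + ι * C) * (z - ι * C)) = x ^ 4 := by
    linear_combination hzC - r * C ^ 2 * hι2 - s * C ^ 2 * hr
  have hxC : IsCoprime x C := hC ▸ (hx.symm.pow_right.mul_right hxy.pow_right)
  have hz : IsCoprime z (ι * C) := by
    have : IsCoprime (r * z ^ 2) C := hzC ▸ (hxC.pow_left.add_mul_right_left (s * C))
    exact (isCoprime_mul_unit_left_right hι _ _).2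
      ((IsCoprime.pow_left_iff two_pos).1 this.of_mul_left_right)
  have h2 : IsCoprime 2 ((z + ι * C) * (z - ι * C)) := (hfac ▸ hx.pow_right).of_mul_right_right
  obtain ⟨h2A, h2B⟩ := IsCoprime.mul_right_iff.1 h2
  have hAB : IsCoprime (z + ι * C) (z - ι * C) := h2A.of_add_of_sub hz (by ring) (by ring)
  have hx4 : Associated (x ^ 4) ((z + ι * C) * (z - ι * C)) :=
    hfac ▸ associated_unit_mul_left _ _ (IsUnit.of_pow_eq_one hr two_ne_zero)
  obtain ⟨G, ⟨δ₁, hG⟩⟩ := exists_associated_pow_of_associated_pow_mul hAB hx4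
  obtain ⟨H, ⟨δ₂, hH⟩⟩ :=
    exists_associated_pow_of_associated_pow_mul hAB.symm (mul_comm (z + ι * C) _ ▸ hx4)
  have hGA : G ∣ z + ι * C := (dvd_pow_self G four_ne_zero).trans ⟨δ₁, hG.symm⟩
  have hHB : H ∣ z - ι * C := (dvd_pow_self H four_ne_zero).trans ⟨δ₂, hH.symm⟩
  refine ⟨δ₁, δ₂, ι, G, H, δ₁.isUnit, δ₂.isUnit, hι, h2A.of_isCoprime_of_dvd_right hGA,
    h2B.of_isCoprime_of_dvd_right hHB,
    (hAB.of_isCoprime_of_dvd_left hGA).of_isCoprime_of_dvd_right hHB, ?_⟩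
  linear_combination hG - hH - 2 * ι * hC

theorem exists_sq_add_mul_sq_eq_two_mul {G H : ℤ[i]} (hG : IsCoprime 2 G) (hH : IsCoprime 2 H) :
    ∃ σ w : ℤ[i], σ ^ 2 = 1 ∧ IsCoprime 2 w ∧ G ^ 2 + σ * H ^ 2 = 2 * w := by
  obtain ⟨σ₁, a, hσ₁, ha⟩ := exists_sq_eq_add_four_mul hG
  obtain ⟨σ₂, b, hσ₂, hb⟩ := exists_sq_eq_add_four_mul hH
  have h2σ₁ : IsCoprime 2 σ₁ :=
    isCoprime_one_right.of_isCoprime_of_dvd_right (IsUnit.of_pow_eq_one hσ₁ two_ne_zero).dvd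
  exact ⟨σ₁ * σ₂, σ₁ + 2 * (a + σ₁ * σ₂ * b), by linear_combination σ₂ ^ 2 * hσ₁ + hσ₂,
    h2σ₁.add_mul_left_right _, by linear_combination ha + σ₁ * σ₂ * hb + σ₁ * hσ₂⟩

theorem exists_sq_eq_add_of_pow_four_sub_pow_four {k : ℕ} {ε G H y : ℤ[i]} (hG : IsCoprime 2 G)
    (hH : IsCoprime 2 H) (h : G ^ 4 - H ^ 4 = ε * 2 ^ (k + 2) * y ^ 2) :
    ∃ σ w b : ℤ[i], σ ^ 2 = 1 ∧ IsCoprime 2 w ∧ G ^ 2 = w + 2 ^ k * b ∧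
      σ * H ^ 2 = w - 2 ^ k * b ∧ w * b = ε * y ^ 2 := by
  obtain ⟨σ, w, hσ, hw, hsum⟩ := exists_sq_add_mul_sq_eq_two_mul hG hH
  have hwD : w * (G ^ 2 - σ * H ^ 2) = 2 ^ (k + 1) * (ε * y ^ 2) :=
    mul_left_cancel₀ two_ne_zero <| by
      linear_combination -(G ^ 2 - σ * H ^ 2) * hsum + h - H ^ 4 * hσ
  obtain ⟨b, hb⟩ := hw.pow_left.dvd_of_dvd_mul_left ⟨_, hwD⟩
  refine ⟨σ, w, b, hσ, hw, mul_left_cancel₀ (two_ne_zero' ℤ[i]) ?_,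
    mul_left_cancel₀ (two_ne_zero' ℤ[i]) ?_, mul_left_cancel₀ (pow_ne_zero (k + 1) two_ne_zero) ?_⟩
  · linear_combination hsum + hb
  · linear_combination hsum - hb
  · linear_combination hwD - w * hb

theorem hasOddSolution_of_pow_four_sub_pow_four {k : ℕ} {ε G H y : ℤ[i]} (hε : IsUnit ε)
    (hG : IsCoprime 2 G) (hH : IsCoprime 2 H) (hGH : IsCoprime G H) (hy : IsCoprime 2 y)
    (h : G ^ 4 - H ^ 4 = ε * 2 ^ (k + 2) * y ^ 2) : HasOddSolution k := by
  obtain ⟨σ, w, b, hσ, hw, hGw, hHw, hwb⟩ := exists_sq_eq_add_of_pow_four_sub_pow_four hG hH h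
  have hwb' : IsCoprime w b :=
    (IsCoprime.of_add_of_sub (q := 2 ^ k * b) isCoprime_one_left
      ((isCoprime_mul_unit_left_right (IsUnit.of_pow_eq_one hσ two_ne_zero) _ _).2 hGH.pow)
      (by rw [hGw]; ring) (by rw [hHw]; ring)).of_mul_right_right
  have hy2 : Associated (y ^ 2) (w * b) := hwb ▸ (associated_unit_mul_left _ _ hε).symm
  obtain ⟨u, α, hu⟩ := exists_associated_pow_of_associated_pow_mul hwb' hy2
  obtain ⟨v, β, hv⟩ :=
    exists_associated_pow_of_associated_pow_mul hwb'.symm (by rwa [mul_comm] at hy2)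
  have hb : IsCoprime 2 b :=
    (hwb ▸ (isCoprime_mul_unit_left_right hε _ _).2 hy.pow_right).of_mul_right_right
  have hα := pow_four_eq_one_of_isUnit α.isUnit
  have hβ := pow_four_eq_one_of_isUnit β.isUnit
  subst hu hv
  have hu : u ∣ u ^ 2 * α := dvd_mul_of_dvd_left (dvd_pow_self u two_ne_zero) _
  have hv : v ∣ v ^ 2 * β := dvd_mul_of_dvd_left (dvd_pow_self v two_ne_zero) _
  refine ⟨σ * α ^ 2, -(α ^ 2 * β ^ 2), u, v, G * H, by linear_combination σ ^ 2 * hα + hσ,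
    by linear_combination α ^ 4 * hβ + hα, hw.of_isCoprime_of_dvd_right hu,
    hb.of_isCoprime_of_dvd_right hv,
    (hwb'.of_isCoprime_of_dvd_left hu).of_isCoprime_of_dvd_right hv, ?_⟩
  rw [show (4 : ℤ[i]) ^ k = (2 ^ k) ^ 2 by rw [sq, ← mul_pow]; norm_num]
  linear_combination α ^ 2 * σ * H ^ 2 * hGw + α ^ 2 * (u ^ 2 * α + 2 ^ k * (v ^ 2 * β)) * hHw +
    u ^ 4 * hα

theorem not_hasOddSolution_one : ¬ HasOddSolution 1 := by
  rintro ⟨r, s, x, y, z, hr, hs, hx, hy, hxy, h⟩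
  obtain ⟨δ₁, δ₂, ι, G, H, h₁, h₂, hι, hG, hH, -, hGH⟩ :=
    exists_mul_pow_four_sub_mul_pow_four (j := 0) hr hs hx hxy h
  obtain ⟨σ, t, hσ, hy2⟩ := exists_sq_eq_add_four_mul hy
  obtain ⟨c, hc⟩ := eight_dvd_mul_pow_four_sub_mul_pow_four_sub (δ₁ := δ₁) (δ₂ := δ₂) hG hH
  exact not_eight_dvd_four_mul_sub_add (hι.mul (IsUnit.of_pow_eq_one hσ two_ne_zero)) h₁ h₂
    ⟨c - 2 * ι * t, by linear_combination hc - hGH - 4 * ι * hy2⟩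

theorem HasOddSolution.descend {j : ℕ} (h : HasOddSolution (j + 2)) : HasOddSolution (j + 1) := by
  obtain ⟨r, s, x, y, z, hr, hs, hx, hy, hxy, h⟩ := h
  obtain ⟨δ₁, δ₂, ι, G, H, h₁, h₂, hι, hG, hH, hGH, hδ⟩ :=
    exists_mul_pow_four_sub_mul_pow_four hr hs hx hxy h
  have h8 : 8 ∣ δ₁ - δ₂ :=
    (dvd_sub_right ⟨2 ^ j * ι * y ^ 2, by ring⟩).1
      (hδ ▸ eight_dvd_mul_pow_four_sub_mul_pow_four_sub hG hH)
  obtain rfl := eq_of_eight_dvd_sub h₁ h₂ h8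
  obtain ⟨δ, hδ₁⟩ := h₁.exists_left_inv
  exact hasOddSolution_of_pow_four_sub_pow_four ((IsUnit.of_mul_eq_one _ hδ₁).mul hι) hG hH hGH
    hy (by linear_combination δ * hδ - (G ^ 4 - H ^ 4) * hδ₁)

theorem not_hasOddSolution_succ : ∀ j, ¬ HasOddSolution (j + 1)
  | 0 => not_hasOddSolution_one
  | j + 1 => fun h => not_hasOddSolution_succ j h.descend

theorem sq_ne_pow_four_sub_pow_four {a d e : ℤ[i]} (ha : IsCoprime 2 a) (hd₀ : d ≠ 0) (hd : π ∣ d)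
    (had : IsCoprime a d) : e ^ 2 ≠ a ^ 4 - d ^ 4 := by
  obtain ⟨k, t, ht, rfl⟩ := WfDvdMonoid.max_power_factor hd₀ prime_one_add_sqrtd.irreducible
  obtain ⟨j, rfl⟩ : ∃ j, k = j + 1 :=
    Nat.exists_eq_add_one.2 (Nat.pos_of_ne_zero (by rintro rfl; simp_all))
  intro he
  refine not_hasOddSolution_succ j ⟨1, (-1) ^ j, a, t, e, one_pow 2, ?_, ha,
    isCoprime_two_iff_not_dvd.2 ht, had.of_mul_right_right, ?_⟩
  · rw [← pow_mul, mul_comm, pow_mul, neg_one_sq, one_pow]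
  · rw [one_mul, he, mul_pow, ← pow_mul, mul_comm (j + 1), pow_mul, show π ^ 4 = -4 by decide,
      neg_pow]
    ring

theorem exists_sq_eq_pow_four_sub_pow_four {n m n' m' : ℤ[i]} (h₀ : n * m ≠ 0)
    (hn : IsCoprime 2 n) (hn' : IsCoprime 2 n') (hm : π ∣ m) (hnm : IsCoprime n m)
    (hnm' : IsCoprime n' m') (h₁ : n ^ 2 + m ^ 2 = n' ^ 2 - m' ^ 2) (h₂ : n * m = n' * m') :
    ∃ a d e : ℤ[i], IsCoprime 2 a ∧ d ≠ 0 ∧ π ∣ d ∧ IsCoprime a d ∧ e ^ 2 = a ^ 4 - d ^ 4 := by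
  have hn'₀ : n' ≠ 0 := left_ne_zero_of_mul (h₂ ▸ h₀)
  obtain ⟨a, b, c, d, u, rfl, rfl, hu, rfl⟩ := exists_eq_mul_of_mul_eq_mul hn'₀ hnm hnm' h₂
  have hcn' : c ∣ n' := (Units.dvd_mul_right).1 ⟨a, by rw [hu]; ring⟩
  have hd : π ∣ d := (prime_one_add_sqrtd.dvd_or_dvd hm).resolve_left
    (isCoprime_two_iff_not_dvd.1 (hn'.of_isCoprime_of_dvd_right hcn'))
  have hbc : IsCoprime b c := ((hnm'.of_isCoprime_of_dvd_left hcn').of_isCoprime_of_dvd_right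
    (Units.dvd_mul_left.2 (dvd_mul_right b d))).symm
  have hc₀ : c ≠ 0 := left_ne_zero_of_mul (right_ne_zero_of_mul h₀)
  have hu4 := pow_four_eq_one_of_isUnit u.isUnit
  have h : b ^ 2 * (u ^ 2 * a ^ 2 + d ^ 2) = c ^ 2 * (a ^ 2 - u ^ 2 * d ^ 2) := by
    linear_combination u ^ 2 * h₁ + (n' * u + a * c) * hu - b ^ 2 * d ^ 2 * hu4
  obtain ⟨w, hw⟩ := (hbc.symm.pow (m := 2) (n := 2)).dvd_of_dvd_mul_left ⟨_, h⟩
  have hw' : a ^ 2 - u ^ 2 * d ^ 2 = b ^ 2 * w :=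
    mul_left_cancel₀ (pow_ne_zero 2 hc₀) (by linear_combination -h + b ^ 2 * hw)
  refine ⟨a, d, u * b * c * w, hn.of_mul_right_left, right_ne_zero_of_mul (right_ne_zero_of_mul h₀),
    hd, hnm.of_mul_left_left.of_mul_right_right, ?_⟩
  linear_combination -u ^ 2 * b ^ 2 * w * hw - u ^ 2 * (u ^ 2 * a ^ 2 + d ^ 2) * hw' +
    (a ^ 4 - u ^ 2 * a ^ 2 * d ^ 2 - d ^ 4) * hu4

end GaussianInt

/-- The resolvent system arising from `x⁴ + y⁴ = i·z²` has no solutions: there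
are no Gaussian integers `n, m, n', m'` with `n * m ≠ 0`, `gcd (n, m)` a unit,
`gcd (n', m')` a unit, `m` and `m'` both divisible by `1 + i`, such that
`n² + m² = n'² - m'²` and `n·m = n'·m'`. -/
theorem no_solution_resolvent_system_i :
    ¬ ∃ n m n' m' : GaussianInt, n * m ≠ 0 ∧
      (∀ d : GaussianInt, d ∣ n → d ∣ m → IsUnit d) ∧
      (∀ d : GaussianInt, d ∣ n' → d ∣ m' → IsUnit d) ∧
      (1 + sqrtd) ∣ m ∧ (1 + sqrtd) ∣ m' ∧
      n ^ 2 + m ^ 2 = n' ^ 2 - m' ^ 2 ∧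
      n * m = n' * m' := by
  rintro ⟨n, m, n', m', h₀, hnm, hnm', hm, hm', h₁, h₂⟩
  have odd_of_isRelPrime {x y : ℤ[i]} (h : IsRelPrime x y) (hy : π ∣ y) : IsCoprime 2 x :=
    GaussianInt.isCoprime_two_iff_not_dvd.2 fun hx =>
      GaussianInt.prime_one_add_sqrtd.not_isUnit (h hx hy)
  obtain ⟨a, d, e, ha, hd₀, hd, had, he⟩ :=
    GaussianInt.exists_sq_eq_pow_four_sub_pow_four h₀ (odd_of_isRelPrime hnm hm)
      (odd_of_isRelPrime hnm' hm') hm (IsRelPrime.isCoprime hnm) (IsRelPrime.isCoprime hnm') h₁ h₂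
  exact GaussianInt.sq_ne_pow_four_sub_pow_four ha hd₀ hd had he
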